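/- arXiv:1003.1158 — 2 statements merged into one kernel-verified Lean document; each statement's English description precedes it below -/
import Mathlib

section
/- For every GT-pattern P ∈ GT(λ+ρ) of rank r, the integers k_1(P), k_2(P), …, k_r(P) are all nonnegative. -/
/-! Gelfand–Tsetlin patterns for `Sp(2r)` (type `C_r`), following
Beineke–Brubaker–Frechette. Entries are indexed as in the paper:
row `a i` has entries `a i j` for `i+1 ≤ j ≤ r` (so the top row is `a 0`),
and row `b i` has entries `b i j` for `i ≤ j ≤ r`, `1 ≤ i ≤ r`.
All out-of-range entries are `0`. -/

/-- `Lfun l j = l 1 + l 2 + ⋯ + l j + j`. -/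
def Lfun (l : ℕ → ℕ) (j : ℕ) : ℕ := (∑ t ∈ Finset.Icc 1 j, l t) + j

/-- A Gelfand–Tsetlin pattern of rank `r` in `GT(λ+ρ)`, i.e. with top row
`(L r, L (r-1), …, L 1)` where `L j = l 1 + ⋯ + l j + j`. -/
structure GTPattern (r : ℕ) (l : ℕ → ℕ) where
  a : ℕ → ℕ → ℕ
  b : ℕ → ℕ → ℕ
  a_zero : ∀ i j, ¬(i < r ∧ i + 1 ≤ j ∧ j ≤ r) → a i j = 0
  b_zero : ∀ i j, ¬(1 ≤ i ∧ i ≤ j ∧ j ≤ r) → b i j = 0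
  top : ∀ j, 1 ≤ j → j ≤ r → a 0 j = Lfun l (r + 1 - j)
  b_le_a_above : ∀ i j, 1 ≤ i → i ≤ j → j ≤ r → b i j ≤ a (i - 1) j
  a_above_le_b : ∀ i j, 1 ≤ i → i ≤ j → j < r → a (i - 1) (j + 1) ≤ b i j
  b_le_a_below : ∀ i j, 1 ≤ i → i < r → i + 1 ≤ j → j ≤ r → b i j ≤ a i j
  a_below_le_b : ∀ i j, 1 ≤ i → i < r → i ≤ j → j < r → a i (j + 1) ≤ b i j

namespace GTPattern

variable {r : ℕ} {l : ℕ → ℕ} (P : GTPattern r l)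

/-- Row sum `s_a(i) = Σ_{m=i+1}^r a_{i,m}`. -/
def sa (i : ℕ) : ℤ := ∑ m ∈ Finset.Icc (i + 1) r, (P.a i m : ℤ)

/-- Row sum `s_b(i) = Σ_{m=i}^r b_{i,m}`. -/
def sb (i : ℕ) : ℤ := ∑ m ∈ Finset.Icc i r, (P.b i m : ℤ)

/-- The weight `wgt_i(P) = s_a(r-i) - 2 s_b(r+1-i) + s_a(r+1-i)`. -/
def wgt (i : ℕ) : ℤ := P.sa (r - i) - 2 * P.sb (r + 1 - i) + P.sa (r + 1 - i)

/-- The `k`-coordinates `k_i(P)`. -/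
def kcoord (i : ℕ) : ℤ :=
  if i = 1 then P.sa 0 - ∑ m ∈ Finset.Icc 1 r, (P.sb m - P.sa m)
  else P.sa 0 - 2 * ∑ m ∈ Finset.Icc 1 (r + 1 - i), (P.sb m - P.sa m)
        - P.sa (r + 1 - i) + ∑ m ∈ Finset.Icc 1 (r + 1 - i), (P.a 0 m : ℤ)

/-- `v_{i,j} = Σ_{m=i}^j (a_{i-1,m} - b_{i,m})`. -/
def v (i j : ℕ) : ℤ := ∑ m ∈ Finset.Icc i j, ((P.a (i - 1) m : ℤ) - (P.b i m : ℤ))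

/-- `w_{i,j} = Σ_{m=j}^r (a_{i,m} - b_{i,m})`. -/
def w (i j : ℕ) : ℤ := ∑ m ∈ Finset.Icc j r, ((P.a i m : ℤ) - (P.b i m : ℤ))

/-- `u_{i,j} = v_{i,r} + w_{i,j}`. -/
def u (i j : ℕ) : ℤ := P.v i r + P.w i j

/-- `P` is minimal at `b_{i,j}` if `b_{i,j} = a_{i-1,j}`. -/
def MinimalB (i j : ℕ) : Prop := P.b i j = P.a (i - 1) j

/-- `P` is maximal at `b_{i,j}` if `j < r` and `b_{i,j} = a_{i-1,j+1}`, or `j = r`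
and `b_{i,r} = 0`. -/
def MaximalB (i j : ℕ) : Prop :=
  (j < r ∧ P.b i j = P.a (i - 1) (j + 1)) ∨ (j = r ∧ P.b i r = 0)

/-- `P` is minimal at `a_{i,j}` if `a_{i,j} = b_{i,j}`. -/
def MinimalA (i j : ℕ) : Prop := P.a i j = P.b i j

/-- `P` is maximal at `a_{i,j}` if `a_{i,j} = b_{i,j-1}`. -/
def MaximalA (i j : ℕ) : Prop := P.a i j = P.b i (j - 1)

/-- A pattern is strict if its entries strictly decrease along each row. -/
def Strict : Prop :=
  (∀ i j, i < r → i + 1 ≤ j → j < r → P.a i (j + 1) < P.a i j) ∧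
  (∀ i j, 1 ≤ i → i ≤ j → j < r → P.b i (j + 1) < P.b i j)

/-- A pattern is stable if it is strict and every entry below the top row is
minimal or maximal. -/
def Stable : Prop := P.Strict ∧
  (∀ i j, 1 ≤ i → i ≤ j → j ≤ r → P.MinimalB i j ∨ P.MaximalB i j) ∧
  (∀ i j, 1 ≤ i → i < r → i + 1 ≤ j → j ≤ r → P.MinimalA i j ∨ P.MaximalA i j)

/-- The set of entries of row `a i`. -/
def rowA (i : ℕ) : Finset ℕ := (Finset.Icc (i + 1) r).image (P.a i)

end GTPattern

/-- `alphaC i j` is the `e_j`-coefficient of the simple root `α_i` of `C_r`: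
`α_1 = 2 e_1` and `α_i = e_i - e_{i-1}` for `i ≥ 2`. -/
def alphaC (i j : ℕ) : ℤ :=
  if i = 1 then (if j = 1 then 2 else 0)
  else if j = i then 1 else if j = i - 1 then -1 else 0

/-! The interleaving inequalities make every `v_{m,j}`, and every `w_{m,j}` with `m < j`, a sum
of nonnegative gaps. Writing `T_t = Σ_{j=t+1}^R a_{t,j}` (`saUpTo t R`), one has, for
`1 ≤ m ≤ R ≤ r`,
`v_{m,R} + u_{m,R+1} = (s_a(m-1) + T_{m-1}) - (s_a(m) + T_m) + 2 (s_a(m) - s_b(m))`,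
and summing over `m` telescopes to the expression defining `k_{r+1-R}(P)` when `R < r`, and
to `2 k_1(P)` when `R = r`. So each `k_i(P)` is (half of) a sum of nonnegative gaps. -/

namespace Finset

variable {M : Type*}

theorem sum_Icc_consecutive [AddCommMonoid M] (f : ℕ → M) {m n k : ℕ} (hmn : m ≤ n + 1)
    (hnk : n ≤ k) : ∑ i ∈ Icc m n, f i + ∑ i ∈ Icc (n + 1) k, f i = ∑ i ∈ Icc m k, f i := by
  simp only [← Ico_add_one_right_eq_Icc]
  exact sum_Ico_consecutive f hmn (by omega)

theorem sum_Icc_one_pred_sub [AddCommGroup M] (f : ℕ → M) (n : ℕ) :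
    ∑ m ∈ Icc 1 n, (f (m - 1) - f m) = f 0 - f n := by
  induction n with
  | zero => simp
  | succ n ih =>
    rw [sum_Icc_succ_top (by omega), ih, Nat.add_sub_cancel]
    abel

end Finset

open Finset

namespace GTPattern

variable {r : ℕ} {l : ℕ → ℕ} (P : GTPattern r l)

def saUpTo (i R : ℕ) : ℤ := ∑ m ∈ Icc (i + 1) R, (P.a i m : ℤ)

theorem b_le_a_pred (i j : ℕ) : P.b i j ≤ P.a (i - 1) j := by
  by_cases h : 1 ≤ i ∧ i ≤ j ∧ j ≤ r
  · exact P.b_le_a_above i j h.1 h.2.1 h.2.2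
  · simp [P.b_zero i j h]

theorem b_le_a_of_lt {i j : ℕ} (hij : i < j) : P.b i j ≤ P.a i j := by
  by_cases h : 1 ≤ i ∧ j ≤ r
  · exact P.b_le_a_below i j h.1 (by omega) hij h.2
  · simp [P.b_zero i j (by omega)]

theorem v_nonneg (i j : ℕ) : 0 ≤ P.v i j :=
  sum_nonneg fun m _ => sub_nonneg.2 (by exact_mod_cast P.b_le_a_pred i m)

theorem w_nonneg {i j : ℕ} (hij : i < j) : 0 ≤ P.w i j :=
  sum_nonneg fun m hm => sub_nonneg.2 <| by
    exact_mod_cast P.b_le_a_of_lt (hij.trans_le (mem_Icc.1 hm).1)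

theorem u_nonneg {i j : ℕ} (hij : i < j) : 0 ≤ P.u i j :=
  add_nonneg (P.v_nonneg i r) (P.w_nonneg hij)

theorem sa_eq_zero_of_le {i : ℕ} (hi : r ≤ i) : P.sa i = 0 := by
  rw [sa, Icc_eq_empty (by omega), sum_empty]

theorem sa_pred_sub_sb {m : ℕ} (hm : 1 ≤ m) : P.sa (m - 1) - P.sb m = P.v m r := by
  rw [sa, sb, v, sum_sub_distrib, Nat.sub_add_cancel hm]

theorem v_add_u {m R : ℕ} (hm : 1 ≤ m) (hmR : m ≤ R) (hR : R ≤ r) :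
    P.v m R + P.u m (R + 1) =
      (P.sa (m - 1) + P.saUpTo (m - 1) R) - (P.sa m + P.saUpTo m R)
        + 2 * (P.sa m - P.sb m) := by
  have hsa : P.saUpTo m R + ∑ j ∈ Icc (R + 1) r, (P.a m j : ℤ) = P.sa m :=
    sum_Icc_consecutive _ (by omega) hR
  have hsb : ∑ j ∈ Icc m R, (P.b m j : ℤ) + ∑ j ∈ Icc (R + 1) r, (P.b m j : ℤ) = P.sb m :=
    sum_Icc_consecutive _ (by omega) hR
  have hT : P.saUpTo (m - 1) R = ∑ j ∈ Icc m R, (P.a (m - 1) j : ℤ) := by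
    rw [saUpTo, Nat.sub_add_cancel hm]
  have hvR : P.v m R = P.saUpTo (m - 1) R - ∑ j ∈ Icc m R, (P.b m j : ℤ) := by
    rw [v, sum_sub_distrib, hT]
  have hw : P.w m (R + 1) =
      ∑ j ∈ Icc (R + 1) r, (P.a m j : ℤ) - ∑ j ∈ Icc (R + 1) r, (P.b m j : ℤ) := by
    rw [w, sum_sub_distrib]
  rw [u, hvR, hw, ← P.sa_pred_sub_sb hm]
  linear_combination hsa - hsb

theorem sum_v_add_u {R : ℕ} (hR : R ≤ r) :
    ∑ m ∈ Icc 1 R, (P.v m R + P.u m (R + 1)) =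
      P.sa 0 - 2 * ∑ m ∈ Icc 1 R, (P.sb m - P.sa m) - P.sa R + ∑ m ∈ Icc 1 R, (P.a 0 m : ℤ) := by
  rw [sum_congr rfl fun m hm => P.v_add_u (mem_Icc.1 hm).1 (mem_Icc.1 hm).2 hR,
    sum_add_distrib, sum_Icc_one_pred_sub (fun t => P.sa t + P.saUpTo t R), ← mul_sum,
    sum_sub_distrib, sum_sub_distrib]
  simp only [saUpTo, zero_add, Icc_eq_empty (Nat.lt_succ_self R).not_ge, sum_empty]
  ring

theorem sum_v_add_u_nonneg (R : ℕ) : 0 ≤ ∑ m ∈ Icc 1 R, (P.v m R + P.u m (R + 1)) :=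
  sum_nonneg fun m hm =>
    add_nonneg (P.v_nonneg m R) (P.u_nonneg (Nat.lt_succ_of_le (mem_Icc.1 hm).2))

theorem kcoord_eq_sum_v_add_u {i : ℕ} (hi : 1 ≤ i) (hi1 : i ≠ 1) :
    P.kcoord i = ∑ m ∈ Icc 1 (r + 1 - i), (P.v m (r + 1 - i) + P.u m (r + 1 - i + 1)) := by
  rw [kcoord, if_neg hi1, P.sum_v_add_u (by omega)]

theorem two_mul_kcoord_one : 2 * P.kcoord 1 = ∑ m ∈ Icc 1 r, (P.v m r + P.u m (r + 1)) := by
  rw [P.sum_v_add_u le_rfl, P.sa_eq_zero_of_le le_rfl, kcoord, if_pos rfl]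
  simp only [sa, zero_add]
  ring

end GTPattern

theorem gt_kcoord_nonneg_general (r : ℕ) (l : ℕ → ℕ) (P : GTPattern r l) :
    ∀ i, 1 ≤ i → i ≤ r → 0 ≤ P.kcoord i := by
  intro i hi _
  rcases eq_or_ne i 1 with rfl | hi1
  · linarith [P.two_mul_kcoord_one, P.sum_v_add_u_nonneg r]
  · rw [P.kcoord_eq_sum_v_add_u hi hi1]
    exact P.sum_v_add_u_nonneg _

/-- For every GT-pattern `P ∈ GT(λ+ρ)` of rank `r`, the
integers `k_1(P), …, k_r(P)` are all nonnegative. -/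
theorem gt_kcoord_nonneg (r : ℕ) (hr : 1 ≤ r) (l : ℕ → ℕ) (P : GTPattern r l) :
    ∀ i, 1 ≤ i → i ≤ r → 0 ≤ P.kcoord i :=
  gt_kcoord_nonneg_general r l P
end

section
/- Let P ∈ GT(λ+ρ) be a stable GT-pattern of rank r with associated signed permutation w = (σ, ε) ∈ W(C_r). Then for each 1 ≤ i ≤ r: u_{r+1−i,j} = 0 at every minimal entry a_{r+1−i,j} and v_{r+1−i,j} = 0 at every minimal entry b_{r+1−i,j}; and the multiset of values { v_{r+1−i,j} : b_{r+1−i,j} maximal } ∪ { u_{r+1−i,j} : a_{r+1−i,j} maximal } equals the multiset { d_λ(α) : α ∈ Φ_w^{(i)} }. Explicitly: if ε^{(i)} = +1, all v_{r+1−i,j} vanish and the multiset of u-values at maximal entries of row a_{r+1−i} equals { L_{σ^{−1}(j)} − L_{σ^{−1}(i)} : j < i, σ^{−1}(j) > σ^{−1}(i) }; if ε^{(i)} = −1, the multiset of v-values at maximal entries of row b_{r+1−i} equals { L_{σ^{−1}(i)} } ∪ { L_{σ^{−1}(i)} − L_{σ^{−1}(j)} : j < i, σ^{−1}(j) < σ^{−1}(i)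 } and the multiset of u-values over row a_{r+1−i} (all of whose entries are maximal) equals { L_{σ^{−1}(i)} + L_{σ^{−1}(j)} : j < i }. -/
/-! The root system `C_r` in `ℝ^r`, signed permutations, and the sets `Φ_w`. -/

/-- The standard basis vector `e k` of `ℝ^r`. -/
noncomputable def eVec (r : ℕ) (k : Fin r) : Fin r → ℝ := fun j => if j = k then 1 else 0

/-- The positive roots of `C_r`:
`Φ⁺ = { 2e_k } ∪ { e_m + e_l, e_m − e_l : l < m }`. -/
def PhiPlus (r : ℕ) : Set (Fin r → ℝ) :=
  {α | (∃ k : Fin r, α = (2 : ℝ) • eVec r k) ∨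
       (∃ l m : Fin r, l < m ∧ (α = eVec r m + eVec r l ∨ α = eVec r m - eVec r l))}

/-- The action of a signed permutation `w = (σ, ε)` on `ℝ^r`:
`w(t)_j = ε^{(j)} t_{σ⁻¹(j)}`. -/
noncomputable def wAct {r : ℕ} (σ : Equiv.Perm (Fin r)) (ε : Fin r → ℤˣ) (t : Fin r → ℝ) :
    Fin r → ℝ :=
  fun j => ((ε j : ℤ) : ℝ) * t (σ⁻¹ j)

/-- `Φ_w = { α ∈ Φ⁺ : w(α) ∈ Φ⁻ }` where `Φ⁻ = −Φ⁺`. -/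
def PhiW {r : ℕ} (σ : Equiv.Perm (Fin r)) (ε : Fin r → ℤˣ) : Set (Fin r → ℝ) :=
  {α | α ∈ PhiPlus r ∧ -(wAct σ ε α) ∈ PhiPlus r}

/-- The type-L root `α_{i,w} = 2 e_{σ⁻¹(i)}`. -/
noncomputable def rootL {r : ℕ} (σ : Equiv.Perm (Fin r)) (i : Fin r) : Fin r → ℝ :=
  (2 : ℝ) • eVec r (σ⁻¹ i)

/-- The type-S⁺ root `α⁺_{i,j,w} = e_{σ⁻¹(j)} + e_{σ⁻¹(i)}`. -/
noncomputable def rootP {r : ℕ} (σ : Equiv.Perm (Fin r)) (i j : Fin r) : Fin r → ℝ :=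
  eVec r (σ⁻¹ j) + eVec r (σ⁻¹ i)

/-- The type-S⁻ root `α⁻_{i,j,w}`, equal to `e_{σ⁻¹(j)} − e_{σ⁻¹(i)}` if
`σ⁻¹(j) > σ⁻¹(i)` and to `e_{σ⁻¹(i)} − e_{σ⁻¹(j)}` otherwise. -/
noncomputable def rootM {r : ℕ} (σ : Equiv.Perm (Fin r)) (i j : Fin r) : Fin r → ℝ :=
  if σ⁻¹ i < σ⁻¹ j then eVec r (σ⁻¹ j) - eVec r (σ⁻¹ i)
  else eVec r (σ⁻¹ i) - eVec r (σ⁻¹ j)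

/-- `Φ_w^{(i)}`: those roots `α_{i,w}`, `α⁺_{i,j,w}`, `α⁻_{i,j,w}` (`j < i`)
that lie in `Φ_w`. -/
def PhiWi {r : ℕ} (σ : Equiv.Perm (Fin r)) (ε : Fin r → ℤˣ) (i : Fin r) :
    Set (Fin r → ℝ) :=
  {α | (α = rootL σ i ∨ ∃ j : Fin r, j < i ∧ (α = rootP σ i j ∨ α = rootM σ i j)) ∧
       α ∈ PhiW σ ε}

/-- The standard inner product on `ℝ^r`. -/
noncomputable def ip {r : ℕ} (x y : Fin r → ℝ) : ℝ := ∑ j, x j * y j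

/-- `d_λ(α) = 2⟨λ+ρ, α⟩ / ⟨α, α⟩`, for `λ+ρ = (L_1, …, L_r)`. -/
noncomputable def dlam {r : ℕ} (L : Fin r → ℝ) (α : Fin r → ℝ) : ℝ := 2 * ip L α / ip α α

/-- The vector `λ+ρ = (L_1, …, L_r)` as an element of `ℝ^r`. -/
noncomputable def Lreal (l : ℕ → ℕ) (r : ℕ) : Fin r → ℝ :=
  fun j => (Lfun l (j.1 + 1) : ℝ)


/-! Read a stable pattern through the value sets `A_n` of its rows `a_n` and `B_n` of its rows
`b_n`. Interlacing and stability give `A_n ⊆ B_n ⊆ A_{n-1} ∪ {0}` with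
`|B_n| = |A_{n-1}| = |A_n| + 1`, and the weight of level `n` is `Σ A_{n-1} - 2 Σ B_n + Σ A_n`.
Every weight is `±L_k ≠ 0`, so each level loses a positive value; counting down from `A_r = ∅`
shows that no row `a_n` contains `0`. Hence at level `n = r - i` exactly `μ = L_{σ⁻¹(i)}`
disappears, with `B_n = A_{n-1}` if `ε_i = 1` and `B_n = A_n ∪ {0}` if `ε_i = -1`, and
`A_{r-k} = {L_{σ⁻¹(j)} : j < k}`. The maximal and minimal entries of a stable row form two
blocks, so `v` and `u` telescope to differences of entries at the cut, which the value sets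
identify with `L_{σ⁻¹(j)} ± L_{σ⁻¹(i)}`.

On the root side, `w` sends `x e_{σ⁻¹(i)} + y e_{σ⁻¹(j)}` (`j < i`) to `x ε_i e_i + y ε_j e_j`,
which is a negative root exactly when its coefficient `x ε_i` at the larger index is `-1`. -/

open Finset

theorem exists_cut_of_imp_succ {p : ℕ → Prop} {n r : ℕ} (hnr : n ≤ r + 1)
    (hp : ∀ j, n ≤ j → j < r → p j → p (j + 1)) :
    ∃ c, n ≤ c ∧ c ≤ r + 1 ∧ ∀ j, n ≤ j → j ≤ r → (p j ↔ c ≤ j) := by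
  classical
  have hex : ∃ c, n ≤ c ∧ (p c ∨ r < c) := ⟨r + 1, hnr, Or.inr r.lt_succ_self⟩
  obtain ⟨hnc, hc⟩ := Nat.find_spec hex
  refine ⟨Nat.find hex, hnc, Nat.find_min' hex ⟨hnr, Or.inr r.lt_succ_self⟩,
    fun j hj hjr => ⟨fun h => Nat.find_min' hex ⟨hj, Or.inl h⟩, fun h => ?_⟩⟩
  induction j, h using Nat.le_induction with
  | base => exact hc.resolve_right (by omega)
  | succ k hk ih => exact hp k (by omega) (by omega) (ih (by omega) (by omega))

theorem StrictAntiOn.image_Ico_eq_filter {α β : Type*} [LinearOrder α] [LocallyFiniteOrder α]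
    [LinearOrder β] {f : α → β} {p q k : α} (hf : StrictAntiOn f (Set.Icc p q))
    (hk : k ∈ Set.Icc p q) :
    (Ico p k).image f = ((Icc p q).image f).filter (f k < ·) := by
  ext t
  simp only [mem_image, mem_filter, mem_Ico, mem_Icc]
  constructor
  · rintro ⟨j, ⟨hpj, hjk⟩, rfl⟩
    exact ⟨⟨j, ⟨hpj, hjk.le.trans hk.2⟩, rfl⟩, hf ⟨hpj, hjk.le.trans hk.2⟩ hk hjk⟩
  · rintro ⟨⟨j, hj, rfl⟩, hlt⟩
    exact ⟨j, ⟨hj.1, (hf.lt_iff_gt hk hj).1 hlt⟩, rfl⟩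

theorem StrictAntiOn.image_Ioc_eq_filter {α β : Type*} [LinearOrder α] [LocallyFiniteOrder α]
    [LinearOrder β] {f : α → β} {p q k : α} (hf : StrictAntiOn f (Set.Icc p q))
    (hk : k ∈ Set.Icc p q) :
    (Ioc k q).image f = ((Icc p q).image f).filter (· < f k) := by
  ext t
  simp only [mem_image, mem_filter, mem_Ioc, mem_Icc]
  constructor
  · rintro ⟨j, ⟨hkj, hjq⟩, rfl⟩
    exact ⟨⟨j, ⟨hk.1.trans hkj.le, hjq⟩, rfl⟩, hf hk ⟨hk.1.trans hkj.le, hjq⟩ hkj⟩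
  · rintro ⟨⟨j, hj, rfl⟩, hlt⟩
    exact ⟨j, ⟨(hf.lt_iff_gt hj hk).1 hlt, hj.2⟩, rfl⟩

theorem Finset.val_map_comp_of_injOn {α β γ : Type*} [DecidableEq β] {f : β → γ} {g : α → β}
    {s : Finset α} (hg : Set.InjOn g s) :
    s.val.map (fun x => f (g x)) = (s.image g).val.map f := by
  rw [image_val_of_injOn hg, Multiset.map_map]
  rfl

theorem Nat.Ico_val_map_add_one (a b : ℕ) :
    (Ico a b).val.map (· + 1) = (Ico (a + 1) (b + 1)).val := by
  rw [← image_val_of_injOn (add_left_injective 1).injOn, image_add_right_Ico]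

theorem Finset.eq_or_eq_insert_of_subset_of_subset_insert {α : Type*} [DecidableEq α]
    {s t u : Finset α} {a : α} (hst : s ⊆ t) (htu : t ⊆ insert a u) (ha : a ∉ s)
    (hs : s.card + 1 = u.card) (ht : t.card = u.card) : t = u ∨ t = insert a s := by
  by_cases hat : a ∈ t
  · right
    have hsub : s ⊆ t.erase a := fun x hx => mem_erase.2 ⟨fun h => ha (h ▸ hx), hst hx⟩
    rw [← insert_erase hat, eq_of_subset_of_card_le hsub (by rw [card_erase_of_mem hat]; omega)]
  · left
    exact eq_of_subset_of_card_le
      (fun x hx => (mem_insert.1 (htu hx)).resolve_left fun h => hat (h ▸ hx)) ht.ge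

theorem sum_erase_zero (s : Finset ℕ) : ∑ x ∈ s.erase 0, (x : ℤ) = ∑ x ∈ s, (x : ℤ) :=
  sum_erase s Nat.cast_zero

theorem Int.cast_units_eq_one_or {R : Type*} [Ring R] (u : ℤˣ) :
    ((u : ℤ) : R) = 1 ∨ ((u : ℤ) : R) = -1 := by
  rcases Int.units_eq_one_or u with rfl | rfl <;> simp

theorem Lfun_strictMono (l : ℕ → ℕ) : StrictMono (Lfun l) := fun j k hjk => by
  have : ∑ t ∈ Icc 1 j, l t ≤ ∑ t ∈ Icc 1 k, l t :=
    sum_le_sum_of_subset (Icc_subset_Icc_right hjk.le)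
  unfold Lfun
  omega

theorem Lfun_pos (l : ℕ → ℕ) (k : ℕ) : 0 < Lfun l (k + 1) := by
  unfold Lfun
  omega

section Lvals

variable {r : ℕ}

def Lvals (l : ℕ → ℕ) (σ : Equiv.Perm (Fin r)) (k : ℕ) : Finset ℕ :=
  (univ.filter fun j : Fin r => j.1 < k).image fun j => Lfun l ((σ⁻¹ j).1 + 1)

theorem Lfun_perm_injective (l : ℕ → ℕ) (σ : Equiv.Perm (Fin r)) :
    Function.Injective fun j : Fin r => Lfun l ((σ⁻¹ j).1 + 1) := fun _ _ h =>
  σ⁻¹.injective (Fin.ext (by simpa using (Lfun_strictMono l).injective h))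

variable {l : ℕ → ℕ} {σ : Equiv.Perm (Fin r)}

theorem Lfun_perm_lt_iff {a b : Fin r} :
    Lfun l ((σ⁻¹ a).1 + 1) < Lfun l ((σ⁻¹ b).1 + 1) ↔ σ⁻¹ a < σ⁻¹ b := by
  rw [(Lfun_strictMono l).lt_iff_lt, Fin.lt_def]
  omega

theorem Lvals_zero : Lvals l σ 0 = ∅ := by
  simp [Lvals]

theorem Lvals_succ {k : ℕ} (hk : k < r) :
    Lvals l σ (k + 1) = insert (Lfun l ((σ⁻¹ ⟨k, hk⟩).1 + 1)) (Lvals l σ k) := by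
  ext t
  simp only [Lvals, mem_insert, mem_image, mem_filter, mem_univ, true_and]
  constructor
  · rintro ⟨j, hj, rfl⟩
    rcases Nat.lt_succ_iff_lt_or_eq.1 hj with hj | hj
    · exact Or.inr ⟨j, hj, rfl⟩
    · exact Or.inl (by rw [show j = ⟨k, hk⟩ from Fin.ext hj])
  · rintro (rfl | ⟨j, hj, rfl⟩)
    · exact ⟨⟨k, hk⟩, k.lt_succ_self, rfl⟩
    · exact ⟨j, by omega, rfl⟩

theorem image_filter_lt_and_eq_filter_Lvals {i : Fin r} {q : ℕ → Prop} [DecidablePred q]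
    (hq : ¬ q (Lfun l ((σ⁻¹ i).1 + 1))) :
    (univ.filter fun j => j < i ∧ q (Lfun l ((σ⁻¹ j).1 + 1))).image
        (fun j => Lfun l ((σ⁻¹ j).1 + 1)) = (Lvals l σ (i.1 + 1)).filter q := by
  rw [Lvals, filter_image, filter_filter]
  refine congrArg _ (filter_congr fun j _ => ⟨fun ⟨h1, h2⟩ => ⟨by omega, h2⟩, fun ⟨h1, h2⟩ => ?_⟩)
  refine ⟨lt_of_le_of_ne (Nat.lt_succ_iff.1 h1) ?_, h2⟩
  rintro rfl
  exact hq h2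

theorem map_filter_Lvals_gt (i : Fin r) :
    Multiset.map (fun t : ℕ => (t : ℝ) - Lfun l ((σ⁻¹ i).1 + 1))
        ((Lvals l σ (i.1 + 1)).filter (Lfun l ((σ⁻¹ i).1 + 1) < ·)).val
      = Multiset.map (fun j : Fin r => Lreal l r (σ⁻¹ j) - Lreal l r (σ⁻¹ i))
          (univ.filter fun j : Fin r => j < i ∧ σ⁻¹ i < σ⁻¹ j).val := by
  have h := image_filter_lt_and_eq_filter_Lvals (σ := σ) (i := i)
    (q := (Lfun l ((σ⁻¹ i).1 + 1) < ·)) (lt_irrefl _)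
  simp only [Lfun_perm_lt_iff] at h
  rw [← h, ← val_map_comp_of_injOn (Lfun_perm_injective l σ).injOn]
  rfl

theorem map_filter_Lvals_lt (i : Fin r) :
    Multiset.map (fun t : ℕ => (Lfun l ((σ⁻¹ i).1 + 1) : ℝ) - t)
        ((Lvals l σ (i.1 + 1)).filter (· < Lfun l ((σ⁻¹ i).1 + 1))).val
      = Multiset.map (fun j : Fin r => Lreal l r (σ⁻¹ i) - Lreal l r (σ⁻¹ j))
          (univ.filter fun j : Fin r => j < i ∧ σ⁻¹ j < σ⁻¹ i).val := by
  have h := image_filter_lt_and_eq_filter_Lvals (σ := σ) (i := i)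
    (q := (· < Lfun l ((σ⁻¹ i).1 + 1))) (lt_irrefl _)
  simp only [Lfun_perm_lt_iff] at h
  rw [← h, ← val_map_comp_of_injOn (Lfun_perm_injective l σ).injOn]
  rfl

theorem map_Lvals_add (i : Fin r) :
    Multiset.map (fun t : ℕ => (Lfun l ((σ⁻¹ i).1 + 1) : ℝ) + t) (Lvals l σ i.1).val
      = Multiset.map (fun j : Fin r => Lreal l r (σ⁻¹ i) + Lreal l r (σ⁻¹ j))
          (univ.filter fun j : Fin r => j < i).val := by
  rw [Lvals, ← val_map_comp_of_injOn (Lfun_perm_injective l σ).injOn]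
  rfl

end Lvals

namespace GTPattern

variable {r : ℕ} {l : ℕ → ℕ}

def rowB (P : GTPattern r l) (n : ℕ) : Finset ℕ := (Icc n r).image (P.b n)

/-- `w = (σ, ε)` is associated to `P`, i.e. `w(λ+ρ) = -wgt(P)`. -/
def IsAssociated (P : GTPattern r l) (σ : Equiv.Perm (Fin r)) (ε : Fin r → ℤˣ) : Prop :=
  ∀ j : Fin r, (ε j : ℤ) * (Lfun l ((σ⁻¹ j).1 + 1) : ℤ) = - P.wgt (j.1 + 1)

variable {P : GTPattern r l} {n : ℕ} {σ : Equiv.Perm (Fin r)} {ε : Fin r → ℤˣ}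

theorem a_eq_zero_of_lt {i j : ℕ} (hj : r < j) : P.a i j = 0 :=
  P.a_zero i j (by omega)

theorem MaximalB.b_eq {j : ℕ} (h : P.MaximalB n j) : P.b n j = P.a (n - 1) (j + 1) := by
  rcases h with ⟨-, h⟩ | ⟨rfl, h⟩
  · exact h
  · rw [h, a_eq_zero_of_lt (by omega)]

theorem v_eq_zero_of_minimalB {j : ℕ} (h : ∀ m, n ≤ m → m ≤ j → P.MinimalB n m) :
    P.v n j = 0 :=
  sum_eq_zero fun m hm => by
    obtain ⟨h1, h2⟩ := mem_Icc.1 hm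
    rw [h m h1 h2, sub_self]

theorem w_eq_zero_of_minimalA {j : ℕ} (h : ∀ m, j ≤ m → m ≤ r → P.MinimalA n m) :
    P.w n j = 0 :=
  sum_eq_zero fun m hm => by
    obtain ⟨h1, h2⟩ := mem_Icc.1 hm
    rw [h m h1 h2, sub_self]

theorem v_eq_of_cut {c j : ℕ} (hnc : n ≤ c) (hcj : c ≤ j)
    (hmin : ∀ m, n ≤ m → m < c → P.MinimalB n m)
    (hmax : ∀ m, c ≤ m → m ≤ j → P.MaximalB n m) :
    P.v n j = P.a (n - 1) c - P.a (n - 1) (j + 1) := by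
  let f : ℕ → ℤ := fun m => -(P.a (n - 1) m : ℤ)
  have hzero : ∑ m ∈ Ico n c, ((P.a (n - 1) m : ℤ) - P.b n m) = 0 :=
    sum_eq_zero fun m hm => by
      obtain ⟨h1, h2⟩ := mem_Ico.1 hm
      rw [hmin m h1 h2, sub_self]
  have htel : ∑ m ∈ Ico c (j + 1), ((P.a (n - 1) m : ℤ) - P.b n m)
      = ∑ m ∈ Ico c (j + 1), (f (m + 1) - f m) :=
    sum_congr rfl fun m hm => by
      obtain ⟨h1, h2⟩ := mem_Ico.1 hm
      rw [(hmax m h1 (by omega)).b_eq]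
      ring
  rw [v, ← Ico_add_one_right_eq_Icc, ← sum_Ico_consecutive _ hnc (by omega), hzero, htel,
    sum_Ico_sub f (by omega)]
  ring

theorem w_eq_of_cut {j d : ℕ} (hjd : j ≤ d) (hdr : d ≤ r)
    (hmax : ∀ m, j ≤ m → m ≤ d → P.MaximalA n m)
    (hmin : ∀ m, d < m → m ≤ r → P.MinimalA n m) :
    P.w n j = P.b n (j - 1) - P.b n d := by
  let f : ℕ → ℤ := fun m => -(P.b n (m - 1) : ℤ)
  have htel : ∑ m ∈ Ico j (d + 1), ((P.a n m : ℤ) - P.b n m)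
      = ∑ m ∈ Ico j (d + 1), (f (m + 1) - f m) :=
    sum_congr rfl fun m hm => by
      obtain ⟨h1, h2⟩ := mem_Ico.1 hm
      rw [show P.a n m = P.b n (m - 1) from hmax m h1 (by omega)]
      simp only [f, Nat.add_sub_cancel]
      ring
  have hzero : ∑ m ∈ Ico (d + 1) (r + 1), ((P.a n m : ℤ) - P.b n m) = 0 :=
    sum_eq_zero fun m hm => by
      obtain ⟨h1, h2⟩ := mem_Ico.1 hm
      rw [show P.a n m = P.b n m from hmin m (by omega) (by omega), sub_self]
  rw [w, ← Ico_add_one_right_eq_Icc, ← sum_Ico_consecutive _ (by omega : j ≤ d + 1)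
    (by omega : d + 1 ≤ r + 1), hzero, htel, sum_Ico_sub f (by omega)]
  simp only [f, Nat.add_sub_cancel]
  ring

theorem Strict.strictAntiOn_a (hP : P.Strict) (hn : n < r) :
    StrictAntiOn (P.a n) (Set.Icc (n + 1) r) :=
  strictAntiOn_of_succ_lt Set.ordConnected_Icc fun j _ hj hj' => by
    simp only [Order.succ_eq_add_one, Set.mem_Icc] at hj hj'
    exact hP.1 n j hn hj.1 (by omega)

theorem Strict.strictAntiOn_b (hP : P.Strict) (hn : 1 ≤ n) :
    StrictAntiOn (P.b n) (Set.Icc n r) :=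
  strictAntiOn_of_succ_lt Set.ordConnected_Icc fun j _ hj hj' => by
    simp only [Order.succ_eq_add_one, Set.mem_Icc] at hj hj'
    exact hP.2 n j hn hj.1 (by omega)

theorem Strict.strictAntiOn_a_pred (hP : P.Strict) (hn : 1 ≤ n) (hnr : n ≤ r) :
    StrictAntiOn (P.a (n - 1)) (Set.Icc n r) := by
  simpa only [Nat.sub_add_cancel hn] using hP.strictAntiOn_a (n := n - 1) (by omega)

theorem Strict.injOn_a (hP : P.Strict) (n : ℕ) : Set.InjOn (P.a n) (Icc (n + 1) r) := by
  by_cases hn : n < r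
  · simpa only [coe_Icc] using (hP.strictAntiOn_a hn).injOn
  · intro x hx
    simp only [coe_Icc, Set.mem_Icc] at hx
    omega

theorem Strict.card_rowA (hP : P.Strict) (n : ℕ) : (P.rowA n).card = r - n := by
  rw [rowA, card_image_of_injOn (hP.injOn_a n), Nat.card_Icc]
  omega

theorem Strict.card_rowB (hP : P.Strict) (hn : 1 ≤ n) : (P.rowB n).card = r + 1 - n := by
  rw [rowB, card_image_of_injOn (by simpa only [coe_Icc] using (hP.strictAntiOn_b hn).injOn),
    Nat.card_Icc]

theorem Strict.wgt_eq (hP : P.Strict) (hn : 1 ≤ n) (hnr : n ≤ r) :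
    P.wgt (r + 1 - n) = ∑ x ∈ P.rowA (n - 1), (x : ℤ) - 2 * ∑ x ∈ P.rowB n, (x : ℤ)
      + ∑ x ∈ P.rowA n, (x : ℤ) := by
  rw [wgt, show r - (r + 1 - n) = n - 1 by omega, show r + 1 - (r + 1 - n) = n by omega,
    rowA, rowA, rowB, sum_image (hP.injOn_a _), sum_image (hP.injOn_a _),
    sum_image (by simpa only [coe_Icc] using (hP.strictAntiOn_b hn).injOn)]
  rfl

theorem rowA_self : P.rowA r = ∅ := by
  simp [rowA]

theorem Strict.not_minimalA_and_maximalA (hP : P.Strict) (hn : 1 ≤ n) {j : ℕ} (hj : n + 1 ≤ j)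
    (hjr : j ≤ r) : ¬ (P.MinimalA n j ∧ P.MaximalA n j) := fun ⟨hmin, hmax⟩ => by
  have := hP.2 n (j - 1) hn (by omega) (by omega)
  rw [Nat.sub_add_cancel (by omega : 1 ≤ j), ← hmin, ← hmax] at this
  exact this.false

theorem Strict.not_minimalB_and_maximalB (hP : P.Strict) (hn : 1 ≤ n) (h0 : 0 ∉ P.rowA (n - 1))
    {j : ℕ} (hj : n ≤ j) (hjr : j ≤ r) : ¬ (P.MinimalB n j ∧ P.MaximalB n j) := by
  rintro ⟨hmin, hmax⟩
  have heq := hmax.b_eq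
  rw [hmin] at heq
  rcases Nat.lt_or_ge j r with hjr' | hjr'
  · exact (hP.strictAntiOn_a_pred hn (by omega) ⟨hj, hjr⟩ ⟨by omega, hjr'⟩ j.lt_succ_self).ne' heq
  · refine h0 (mem_image.2 ⟨j, mem_Icc.2 ⟨by omega, hjr⟩, ?_⟩)
    rw [heq, a_eq_zero_of_lt (by omega)]

theorem Strict.b_eq_zero_of_zero_mem_rowB (hP : P.Strict) (hn : 1 ≤ n) (hnr : n ≤ r)
    (h : 0 ∈ P.rowB n) : P.b n r = 0 := by
  obtain ⟨m, hm, hm0⟩ := mem_image.1 h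
  have := (hP.strictAntiOn_b hn).antitoneOn (mem_Icc.1 hm) ⟨hnr, le_rfl⟩ (mem_Icc.1 hm).2
  omega

theorem Strict.rowA_eq_rowB_erase (hP : P.Strict) (hn : 1 ≤ n) {d : ℕ} (hnd : n ≤ d)
    (hdr : d ≤ r) (hmax : ∀ j, n + 1 ≤ j → j ≤ d → P.MaximalA n j)
    (hmin : ∀ j, d < j → j ≤ r → P.MinimalA n j) :
    P.rowA n = (P.rowB n).erase (P.b n d) := by
  have hb := hP.strictAntiOn_b hn
  ext t
  simp only [rowA, rowB, mem_erase, mem_image, mem_Icc]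
  constructor
  · rintro ⟨j, ⟨hj, hjr⟩, rfl⟩
    rcases le_or_gt j d with hjd | hjd
    · rw [hmax j hj hjd]
      exact ⟨(hb ⟨by omega, by omega⟩ ⟨hnd, hdr⟩ (by omega)).ne', j - 1, ⟨by omega, by omega⟩, rfl⟩
    · rw [hmin j hjd hjr]
      exact ⟨(hb ⟨hnd, hdr⟩ ⟨by omega, hjr⟩ hjd).ne, j, ⟨by omega, hjr⟩, rfl⟩
  · rintro ⟨hne, m, ⟨hnm, hmr⟩, rfl⟩
    rcases lt_trichotomy m d with hmd | rfl | hmd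
    · exact ⟨m + 1, ⟨by omega, by omega⟩, hmax (m + 1) (by omega) (by omega)⟩
    · exact absurd rfl hne
    · exact ⟨m, ⟨by omega, hmr⟩, hmin m hmd hmr⟩

theorem Strict.rowB_eq_insert_erase (hP : P.Strict) (hn : 1 ≤ n) {c : ℕ} (hnc : n ≤ c)
    (hcr : c ≤ r) (hmin : ∀ j, n ≤ j → j < c → P.MinimalB n j)
    (hmax : ∀ j, c ≤ j → j ≤ r → P.MaximalB n j) :
    P.rowB n = insert 0 ((P.rowA (n - 1)).erase (P.a (n - 1) c)) := by
  have ha := hP.strictAntiOn_a_pred hn (by omega)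
  ext t
  simp only [rowA, rowB, mem_insert, mem_erase, mem_image, mem_Icc, Nat.sub_add_cancel hn]
  constructor
  · rintro ⟨m, ⟨hnm, hmr⟩, rfl⟩
    rcases lt_or_ge m c with hmc | hmc
    · rw [hmin m hnm hmc]
      exact Or.inr ⟨(ha ⟨hnm, hmr⟩ ⟨hnc, hcr⟩ hmc).ne', m, ⟨hnm, hmr⟩, rfl⟩
    · rw [(hmax m hmc hmr).b_eq]
      rcases lt_or_ge m r with hm | hm
      · exact Or.inr ⟨(ha ⟨hnc, hcr⟩ ⟨by omega, hm⟩ (by omega)).ne, m + 1, ⟨by omega, hm⟩, rfl⟩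
      · exact Or.inl (a_eq_zero_of_lt (by omega))
  · rintro (rfl | ⟨hne, k, ⟨hnk, hkr⟩, rfl⟩)
    · exact ⟨r, ⟨by omega, le_rfl⟩, by rw [(hmax r hcr le_rfl).b_eq, a_eq_zero_of_lt (by omega)]⟩
    · rcases lt_trichotomy k c with hkc | rfl | hkc
      · exact ⟨k, ⟨hnk, hkr⟩, hmin k hnk hkc⟩
      · exact absurd rfl hne
      · refine ⟨k - 1, ⟨by omega, by omega⟩, ?_⟩
        rw [(hmax (k - 1) (by omega) (by omega)).b_eq, Nat.sub_add_cancel (by omega)]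

open scoped Classical in
theorem Strict.map_u_maximalA (hP : P.Strict) (hn : 1 ≤ n) {d : ℕ} (hnd : n ≤ d) (hdr : d ≤ r)
    (hd : ∀ j, n + 1 ≤ j → j ≤ r → (P.MaximalA n j ↔ j ≤ d) ∧ (P.MinimalA n j ↔ d < j)) :
    Multiset.map (fun j => ((P.u n j : ℤ) : ℝ))
        ((Icc (n + 1) r).filter fun j => P.MaximalA n j).val
      = Multiset.map (fun t : ℕ => (P.v n r : ℝ) + t - P.b n d)
          ((P.rowB n).filter (P.b n d < ·)).val := by
  have hb := hP.strictAntiOn_b hn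
  have hfilter : (Icc (n + 1) r).filter (fun j => P.MaximalA n j) = Icc (n + 1) d := by
    ext j
    simp only [mem_filter, mem_Icc]
    exact ⟨fun ⟨⟨h1, h2⟩, h3⟩ => ⟨h1, (hd j h1 h2).1.1 h3⟩,
      fun ⟨h1, h2⟩ => ⟨⟨h1, by omega⟩, (hd j h1 (by omega)).1.2 h2⟩⟩
  have hinj : Set.InjOn (P.b n) (Ico n d) := hb.injOn.mono fun m hm => by
    simp only [coe_Ico, Set.mem_Ico, Set.mem_Icc] at hm ⊢
    omega
  calc _ = Multiset.map (fun m => ((P.u n (m + 1) : ℤ) : ℝ)) (Ico n d).val := by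
        rw [hfilter, ← Ico_add_one_right_eq_Icc, ← Nat.Ico_val_map_add_one, Multiset.map_map]
        rfl
    _ = Multiset.map (fun m => (P.v n r : ℝ) + P.b n m - P.b n d) (Ico n d).val :=
        Multiset.map_congr rfl fun m hm => by
          obtain ⟨h1, h2⟩ := mem_Ico.1 (show m ∈ Ico n d from hm)
          rw [u, w_eq_of_cut (by omega) hdr (fun k hk hkd => (hd k (by omega) (by omega)).1.2 hkd)
            (fun k hdk hkr => (hd k (by omega) hkr).2.2 hdk), Nat.add_sub_cancel]
          push_cast
          ring
    _ = _ := by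
        rw [rowB, ← hb.image_Ico_eq_filter ⟨hnd, hdr⟩]
        exact val_map_comp_of_injOn (f := fun t : ℕ => (P.v n r : ℝ) + t - P.b n d) hinj

open scoped Classical in
theorem Strict.map_v_maximalB (hP : P.Strict) (hn : 1 ≤ n) {c : ℕ} (hnc : n ≤ c) (hcr : c ≤ r)
    (hc : ∀ j, n ≤ j → j ≤ r → (P.MaximalB n j ↔ c ≤ j))
    (hmin : ∀ j, n ≤ j → j < c → P.MinimalB n j) :
    Multiset.map (fun j => ((P.v n j : ℤ) : ℝ)) ((Icc n r).filter fun j => P.MaximalB n j).val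
      = (P.a (n - 1) c : ℝ) ::ₘ Multiset.map (fun t : ℕ => (P.a (n - 1) c : ℝ) - t)
          ((P.rowA (n - 1)).filter (· < P.a (n - 1) c)).val := by
  have ha := hP.strictAntiOn_a_pred hn (by omega)
  have hv : ∀ j, c ≤ j → j ≤ r → P.v n j = P.a (n - 1) c - P.a (n - 1) (j + 1) :=
    fun j hcj hjr => v_eq_of_cut hnc hcj hmin fun m hm hmj => (hc m (by omega) (by omega)).2 hm
  have hfilter : (Icc n r).filter (fun j => P.MaximalB n j) = Icc c r := by
    ext j
    simp only [mem_filter, mem_Icc]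
    exact ⟨fun ⟨⟨h1, h2⟩, h3⟩ => ⟨(hc j h1 h2).1 h3, h2⟩,
      fun ⟨h1, h2⟩ => ⟨⟨by omega, h2⟩, (hc j (by omega) h2).2 h1⟩⟩
  have hinj : Set.InjOn (P.a (n - 1)) (Ioc c r) := ha.injOn.mono fun m hm => by
    simp only [coe_Ioc, Set.mem_Ioc, Set.mem_Icc] at hm ⊢
    omega
  rw [hfilter, Icc_eq_cons_Ico hcr, cons_val, Multiset.map_cons, hv r hcr le_rfl,
    a_eq_zero_of_lt (lt_add_one r), Nat.cast_zero, sub_zero, Int.cast_natCast]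
  congr 1
  calc Multiset.map (fun j => ((P.v n j : ℤ) : ℝ)) (Ico c r).val
      = Multiset.map (fun j => (P.a (n - 1) c : ℝ) - P.a (n - 1) (j + 1)) (Ico c r).val :=
        Multiset.map_congr rfl fun j hj => by
          obtain ⟨h1, h2⟩ := mem_Ico.1 (show j ∈ Ico c r from hj)
          rw [hv j h1 h2.le]
          push_cast
          rfl
    _ = Multiset.map (fun m => (P.a (n - 1) c : ℝ) - P.a (n - 1) m) (Ioc c r).val := by
        rw [← Ico_add_one_add_one_eq_Ioc, ← Nat.Ico_val_map_add_one, Multiset.map_map]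
        rfl
    _ = _ := by
        rw [rowA, Nat.sub_add_cancel hn, ← ha.image_Ioc_eq_filter ⟨hnc, hcr⟩]
        exact val_map_comp_of_injOn (f := fun t : ℕ => (P.a (n - 1) c : ℝ) - t) hinj

theorem Stable.maximalB_succ (hP : P.Stable) (hn : 1 ≤ n) {j : ℕ} (hnj : n ≤ j) (hjr : j < r)
    (h : P.MaximalB n j) : P.MaximalB n (j + 1) := by
  refine (hP.2.1 n (j + 1) hn (by omega) hjr).resolve_left fun hmin => ?_
  have := hP.1.2 n j hn hnj hjr
  rw [hmin, h.b_eq] at this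
  exact this.false

theorem Stable.minimalA_succ (hP : P.Stable) (hn : 1 ≤ n) {j : ℕ} (hnj : n + 1 ≤ j) (hjr : j < r)
    (h : P.MinimalA n j) : P.MinimalA n (j + 1) := by
  refine (hP.2.2 n (j + 1) hn (by omega) (by omega) hjr).resolve_right fun hmax => ?_
  have := hP.1.1 n j (by omega) hnj hjr
  rw [hmax, Nat.add_sub_cancel, ← h] at this
  exact this.false

theorem Stable.exists_cut_b (hP : P.Stable) (hn : 1 ≤ n) (hnr : n ≤ r) :
    ∃ c, n ≤ c ∧ c ≤ r + 1 ∧ ∀ j, n ≤ j → j ≤ r → (P.MaximalB n j ↔ c ≤ j) :=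
  exists_cut_of_imp_succ (by omega) fun _ hj hjr => hP.maximalB_succ hn hj hjr

theorem Stable.exists_cut_a (hP : P.Stable) (hn : 1 ≤ n) (hnr : n ≤ r) :
    ∃ d, n ≤ d ∧ d ≤ r ∧ ∀ j, n + 1 ≤ j → j ≤ r →
      (P.MaximalA n j ↔ j ≤ d) ∧ (P.MinimalA n j ↔ d < j) := by
  obtain ⟨c, hnc, hcr, hc⟩ := exists_cut_of_imp_succ (p := P.MinimalA n) (n := n + 1) (r := r)
    (by omega) fun _ hj hjr => hP.minimalA_succ hn hj hjr
  refine ⟨c - 1, by omega, by omega, fun j hj hjr => ?_⟩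
  have hmin : P.MinimalA n j ↔ c - 1 < j := (hc j hj hjr).trans (by omega)
  refine ⟨⟨fun hmax => ?_, fun hle => ?_⟩, hmin⟩
  · by_contra hlt
    exact hP.1.not_minimalA_and_maximalA hn hj hjr ⟨hmin.2 (by omega), hmax⟩
  · refine (hP.2.2 n j hn (by omega) hj hjr).resolve_left fun h => ?_
    have := hmin.1 h
    omega

theorem Stable.not_maximalB_of_zero_notMem_rowB (hP : P.Stable) (hn : 1 ≤ n) (hnr : n ≤ r)
    (h0 : 0 ∉ P.rowB n) {j : ℕ} (hj : n ≤ j) (hjr : j ≤ r) : ¬ P.MaximalB n j := by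
  obtain ⟨c, -, -, hc⟩ := hP.exists_cut_b hn hnr
  intro hmax
  have hr := (hc r hnr le_rfl).2 (((hc j hj hjr).1 hmax).trans hjr)
  refine h0 (mem_image.2 ⟨r, mem_Icc.2 ⟨hnr, le_rfl⟩, ?_⟩)
  rw [hr.b_eq, a_eq_zero_of_lt (by omega)]

theorem Stable.rowA_subset_rowB (hP : P.Stable) (hn : 1 ≤ n) : P.rowA n ⊆ P.rowB n := by
  intro t ht
  obtain ⟨j, hj, rfl⟩ := mem_image.1 ht
  obtain ⟨h1, h2⟩ := mem_Icc.1 hj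
  rcases hP.2.2 n j hn (by omega) h1 h2 with h | h
  · exact mem_image.2 ⟨j, mem_Icc.2 ⟨by omega, h2⟩, h.symm⟩
  · exact mem_image.2 ⟨j - 1, mem_Icc.2 ⟨by omega, by omega⟩, h.symm⟩

theorem Stable.rowB_subset_insert_rowA (hP : P.Stable) (hn : 1 ≤ n) :
    P.rowB n ⊆ insert 0 (P.rowA (n - 1)) := by
  intro t ht
  obtain ⟨j, hj, rfl⟩ := mem_image.1 ht
  obtain ⟨h1, h2⟩ := mem_Icc.1 hj
  rcases hP.2.1 n j hn h1 h2 with h | h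
  · exact mem_insert_of_mem (mem_image.2 ⟨j, mem_Icc.2 ⟨by omega, h2⟩, h.symm⟩)
  · rw [h.b_eq]
    rcases Nat.lt_or_ge j r with hjr | hjr
    · exact mem_insert_of_mem (mem_image.2 ⟨j + 1, mem_Icc.2 ⟨by omega, hjr⟩, rfl⟩)
    · rw [a_eq_zero_of_lt (by omega)]
      exact mem_insert_self 0 _

theorem Stable.card_erase_zero_rowA_lt (hP : P.Stable) (hn : 1 ≤ n) (hnr : n ≤ r)
    (hwgt : P.wgt (r + 1 - n) ≠ 0) :
    ((P.rowA n).erase 0).card < ((P.rowA (n - 1)).erase 0).card := by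
  have hAB := hP.rowA_subset_rowB hn
  have hBA := hP.rowB_subset_insert_rowA hn
  have hsub : (P.rowA n).erase 0 ⊆ (P.rowB n).erase 0 := erase_subset_erase 0 hAB
  have hsub' : (P.rowB n).erase 0 ⊆ (P.rowA (n - 1)).erase 0 := fun x hx => by
    obtain ⟨hx0, hx⟩ := mem_erase.1 hx
    exact mem_erase.2 ⟨hx0, (mem_insert.1 (hBA hx)).resolve_left hx0⟩
  -- if no nonzero value were lost, all three rows would have the same sum and the weight vanishes
  refine card_lt_card (Finset.ssubset_iff_subset_ne.2 ⟨hsub.trans hsub', fun heq => hwgt ?_⟩)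
  have hB : (P.rowB n).erase 0 = (P.rowA n).erase 0 :=
    subset_antisymm (heq ▸ hsub') hsub
  rw [hP.1.wgt_eq hn hnr, ← sum_erase_zero (P.rowA n), ← sum_erase_zero (P.rowB n),
    ← sum_erase_zero (P.rowA (n - 1)), hB, ← heq]
  ring

theorem Stable.zero_notMem_rowA (hP : P.Stable)
    (hwgt : ∀ n, 1 ≤ n → n ≤ r → P.wgt (r + 1 - n) ≠ 0) (hn : n < r) : 0 ∉ P.rowA n := by
  have hcount : ∀ k ≤ r, k ≤ ((P.rowA (r - k)).erase 0).card := by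
    intro k hk
    induction k with
    | zero => exact Nat.zero_le _
    | succ k ih =>
      have := hP.card_erase_zero_rowA_lt (n := r - k) (by omega) (by omega)
        (hwgt _ (by omega) (by omega))
      rw [show r - k - 1 = r - (k + 1) by omega] at this
      have := ih (by omega)
      omega
  intro h0
  have := hcount (r - n) (by omega)
  rw [show r - (r - n) = n by omega, card_erase_of_mem h0, hP.1.card_rowA] at this
  omega

theorem Stable.rowA_pred_eq_insert (hP : P.Stable) (h0 : ∀ m < r, 0 ∉ P.rowA m) (hn : 1 ≤ n)
    (hnr : n ≤ r) {e : ℤˣ} {μ : ℕ} (hμ : 0 < μ) (hwn : (e : ℤ) * μ = -P.wgt (r + 1 - n)) :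
    μ ∉ P.rowA n ∧ P.rowA (n - 1) = insert μ (P.rowA n) ∧
      (e = 1 ∧ P.rowB n = P.rowA (n - 1) ∨ e = -1 ∧ P.rowB n = insert 0 (P.rowA n)) := by
  have hwgt := hP.1.wgt_eq hn hnr
  have h0A : 0 ∉ P.rowA n := by
    rcases Nat.lt_or_ge n r with h | h
    · exact h0 n h
    · simp [show n = r by omega, rowA_self]
  have hcA : (P.rowA n).card + 1 = (P.rowA (n - 1)).card := by
    rw [hP.1.card_rowA, hP.1.card_rowA]
    omega
  have hAB := hP.rowA_subset_rowB hn
  have hBA := hP.rowB_subset_insert_rowA hn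
  have hAA : P.rowA n ⊆ P.rowA (n - 1) := fun x hx =>
    (mem_insert.1 (hBA (hAB hx))).resolve_left fun h => h0A (h ▸ hx)
  obtain ⟨t, ht, hA⟩ := exists_eq_insert_iff.2 ⟨hAA, hcA⟩
  have hsum : ∑ x ∈ P.rowA (n - 1), (x : ℤ) = t + ∑ x ∈ P.rowA n, (x : ℤ) := by
    rw [← hA, sum_insert ht]
  rcases eq_or_eq_insert_of_subset_of_subset_insert hAB hBA h0A hcA
    (by rw [hP.1.card_rowB hn, hP.1.card_rowA]; omega) with hB | hB
  · have he : (e : ℤ) * μ = t := by rw [hwn, hwgt, hB, hsum]; ring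
    rcases Int.units_eq_one_or e with rfl | rfl
    · obtain rfl : μ = t := by simp only [Units.val_one, one_mul] at he; omega
      exact ⟨ht, hA.symm, Or.inl ⟨rfl, hB⟩⟩
    · simp only [Units.val_neg, Units.val_one, neg_mul, one_mul] at he
      omega
  · have he : (e : ℤ) * μ = -t := by rw [hwn, hwgt, hB, sum_insert h0A, hsum]; push_cast; ring
    rcases Int.units_eq_one_or e with rfl | rfl
    · simp only [Units.val_one, one_mul] at he
      omega
    · obtain rfl : μ = t := by
        simp only [Units.val_neg, Units.val_one, neg_mul, one_mul] at he
        omega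
      exact ⟨ht, hA.symm, Or.inr ⟨rfl, hB⟩⟩

theorem IsAssociated.wgt_ne_zero (hw : P.IsAssociated σ ε) (hn : 1 ≤ n) (hnr : n ≤ r) :
    P.wgt (r + 1 - n) ≠ 0 := by
  have h := hw ⟨r - n, by omega⟩
  rw [show r - n + 1 = r + 1 - n by omega] at h
  intro h0
  rw [h0, neg_zero] at h
  exact mul_ne_zero (Units.ne_zero _) (by exact_mod_cast (Lfun_pos l _).ne') h

theorem Stable.rows_of_isAssociated (hP : P.Stable) (hw : P.IsAssociated σ ε) (i : Fin r) :
    0 ∉ P.rowA (r - i.1 - 1) ∧ Lfun l ((σ⁻¹ i).1 + 1) ∉ P.rowA (r - i.1) ∧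
      P.rowA (r - i.1 - 1) = insert (Lfun l ((σ⁻¹ i).1 + 1)) (P.rowA (r - i.1)) ∧
      (ε i = 1 ∧ P.rowB (r - i.1) = P.rowA (r - i.1 - 1) ∨
        ε i = -1 ∧ P.rowB (r - i.1) = insert 0 (P.rowA (r - i.1))) := by
  have h0 : ∀ m < r, 0 ∉ P.rowA m := fun _ hm =>
    hP.zero_notMem_rowA (fun _ hn hnr => hw.wgt_ne_zero hn hnr) hm
  exact ⟨h0 _ (by omega), hP.rowA_pred_eq_insert h0 (by omega) (by omega) (Lfun_pos l _)
    (by rw [hw i, show r + 1 - (r - i.1) = i.1 + 1 by omega])⟩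

theorem Stable.rowA_eq_Lvals (hP : P.Stable) (hw : P.IsAssociated σ ε) {k : ℕ} (hk : k ≤ r) :
    P.rowA (r - k) = Lvals l σ k := by
  induction k with
  | zero => rw [Nat.sub_zero, rowA_self, Lvals_zero]
  | succ k ih =>
    obtain ⟨-, -, h, -⟩ := hP.rows_of_isAssociated hw ⟨k, by omega⟩
    rw [show r - (k + 1) = r - k - 1 by omega, h, ih (by omega), Lvals_succ]

theorem Stable.exists_cut_a_of_rowB_eq_rowA (hP : P.Stable) (hn : 1 ≤ n) (hnr : n ≤ r) {μ : ℕ}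
    (hA : P.rowA (n - 1) = insert μ (P.rowA n)) (hB : P.rowB n = P.rowA (n - 1)) :
    ∃ d, n ≤ d ∧ d ≤ r ∧ P.b n d = μ ∧ ∀ j, n + 1 ≤ j → j ≤ r →
      (P.MaximalA n j ↔ j ≤ d) ∧ (P.MinimalA n j ↔ d < j) := by
  obtain ⟨d, hnd, hdr, hd⟩ := hP.exists_cut_a hn hnr
  refine ⟨d, hnd, hdr, ?_, hd⟩
  have hbd : P.b n d ∈ P.rowB n := mem_image.2 ⟨d, mem_Icc.2 ⟨hnd, hdr⟩, rfl⟩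
  rw [hB, hA] at hbd
  refine (mem_insert.1 hbd).resolve_right ?_
  rw [hP.1.rowA_eq_rowB_erase hn hnd hdr (fun j hj hjd => (hd j hj (by omega)).1.2 hjd)
    (fun j hdj hjr => (hd j (by omega) hjr).2.2 hdj)]
  exact notMem_erase _ _

theorem Stable.exists_cut_b_of_rowB_eq_insert (hP : P.Stable) (hn : 1 ≤ n) (hnr : n ≤ r) {μ : ℕ}
    (h0 : 0 ∉ P.rowA (n - 1)) (hμ : μ ∉ P.rowA n) (hA : P.rowA (n - 1) = insert μ (P.rowA n))
    (hB : P.rowB n = insert 0 (P.rowA n)) :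
    ∃ c, n ≤ c ∧ c ≤ r ∧ P.a (n - 1) c = μ ∧ (∀ j, n ≤ j → j ≤ r → (P.MaximalB n j ↔ c ≤ j)) ∧
      ∀ j, n ≤ j → j < c → P.MinimalB n j := by
  obtain ⟨c, hnc, -, hc⟩ := hP.exists_cut_b hn hnr
  have hcr : c ≤ r := (hc r hnr le_rfl).1
    (Or.inr ⟨rfl, hP.1.b_eq_zero_of_zero_mem_rowB hn hnr (hB ▸ mem_insert_self 0 _)⟩)
  have hminB : ∀ j, n ≤ j → j < c → P.MinimalB n j := fun j hj hjc =>
    (hP.2.1 n j hn hj (by omega)).resolve_right fun h => by have := (hc j hj (by omega)).1 h; omega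
  refine ⟨c, hnc, hcr, ?_, hc, hminB⟩
  have hcA : P.a (n - 1) c ∈ P.rowA (n - 1) := mem_image.2 ⟨c, mem_Icc.2 ⟨by omega, hcr⟩, rfl⟩
  have h1 : P.rowA n = (P.rowA (n - 1)).erase (P.a (n - 1) c) := by
    rw [← erase_insert fun h => h0 (hA ▸ mem_insert_of_mem h), ← hB,
      hP.1.rowB_eq_insert_erase hn hnc hcr hminB (fun j hcj hjr => (hc j (by omega) hjr).2 hcj),
      erase_insert fun h => h0 (mem_of_mem_erase h)]
  have h2 : P.rowA n = (P.rowA (n - 1)).erase μ := by rw [hA, erase_insert hμ]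
  exact (P.rowA (n - 1)).erase_injOn hcA (hA ▸ mem_insert_self μ _) (h1.symm.trans h2)

theorem Stable.cut_a_of_b_eq_zero (hP : P.Stable) (hn : 1 ≤ n) (hnr : n ≤ r)
    (h0 : 0 ∉ P.rowA n) (hbr : P.b n r = 0) :
    ∀ j, n + 1 ≤ j → j ≤ r → (P.MaximalA n j ↔ j ≤ r) ∧ (P.MinimalA n j ↔ r < j) := by
  obtain ⟨d, hnd, hdr, hd⟩ := hP.exists_cut_a hn hnr
  obtain rfl : r = d := by
    by_contra hne
    have hmin : P.MinimalA n r := (hd r (by omega) le_rfl).2.2 (by omega)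
    exact h0 (mem_image.2 ⟨r, mem_Icc.2 ⟨by omega, le_rfl⟩, by rw [hmin, hbr]⟩)
  exact hd

open scoped Classical in
theorem Stable.exponents_of_rowB_eq_rowA (hP : P.Stable) (hn : 1 ≤ n) (hnr : n ≤ r) {μ : ℕ}
    (h0 : 0 ∉ P.rowA (n - 1)) (hA : P.rowA (n - 1) = insert μ (P.rowA n))
    (hB : P.rowB n = P.rowA (n - 1)) :
    (∀ j, n ≤ j → j ≤ r → ¬ P.MaximalB n j ∧ P.v n j = 0) ∧
    (∀ j, n + 1 ≤ j → j ≤ r → P.MinimalA n j → P.u n j = 0) ∧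
    Multiset.map (fun j => ((P.u n j : ℤ) : ℝ))
        ((Icc (n + 1) r).filter fun j => P.MaximalA n j).val
      = Multiset.map (fun t : ℕ => (t : ℝ) - μ) ((P.rowA (n - 1)).filter (μ < ·)).val := by
  have hnoMax : ∀ j, n ≤ j → j ≤ r → ¬ P.MaximalB n j :=
    fun _ => hP.not_maximalB_of_zero_notMem_rowB hn hnr (hB ▸ h0)
  have hv : ∀ j, j ≤ r → P.v n j = 0 := fun j hjr => v_eq_zero_of_minimalB fun m hm hmj =>
    (hP.2.1 n m hn hm (by omega)).resolve_right (hnoMax m hm (by omega))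
  obtain ⟨d, hnd, hdr, hbd, hd⟩ := hP.exists_cut_a_of_rowB_eq_rowA hn hnr hA hB
  refine ⟨fun j hj hjr => ⟨hnoMax j hj hjr, hv j hjr⟩, fun j hj hjr hmin => ?_, ?_⟩
  · have hdj := (hd j hj hjr).2.1 hmin
    rw [u, hv r le_rfl, w_eq_zero_of_minimalA fun m hm hmr => (hd m (by omega) hmr).2.2 (by omega),
      add_zero]
  · rw [hP.1.map_u_maximalA hn hnd hdr hd, hv r le_rfl, hbd, hB]
    simp only [Int.cast_zero, zero_add]

open scoped Classical in
theorem Stable.exponents_of_rowB_eq_insert (hP : P.Stable) (hn : 1 ≤ n) (hnr : n ≤ r) {μ : ℕ}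
    (h0 : 0 ∉ P.rowA (n - 1)) (hμ : μ ∉ P.rowA n) (hA : P.rowA (n - 1) = insert μ (P.rowA n))
    (hB : P.rowB n = insert 0 (P.rowA n)) :
    (∀ j, n ≤ j → j ≤ r → P.MinimalB n j → P.v n j = 0) ∧
    (∀ j, n + 1 ≤ j → j ≤ r → P.MaximalA n j ∧ ¬ P.MinimalA n j) ∧
    Multiset.map (fun j => ((P.v n j : ℤ) : ℝ)) ((Icc n r).filter fun j => P.MaximalB n j).val
      = (μ : ℝ) ::ₘ
        Multiset.map (fun t : ℕ => (μ : ℝ) - t) ((P.rowA (n - 1)).filter (· < μ)).val ∧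
    Multiset.map (fun j => ((P.u n j : ℤ) : ℝ)) (Icc (n + 1) r).val
      = Multiset.map (fun t : ℕ => (μ : ℝ) + t) (P.rowA n).val := by
  have h0' : 0 ∉ P.rowA n := fun h => h0 (hA ▸ mem_insert_of_mem h)
  have hbr : P.b n r = 0 := hP.1.b_eq_zero_of_zero_mem_rowB hn hnr (hB ▸ mem_insert_self 0 _)
  have hd := hP.cut_a_of_b_eq_zero hn hnr h0' hbr
  have hallMax : ∀ j, n + 1 ≤ j → j ≤ r → P.MaximalA n j ∧ ¬ P.MinimalA n j := fun j hj hjr =>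
    ⟨(hd j hj hjr).1.2 hjr, fun h => by have := (hd j hj hjr).2.1 h; omega⟩
  obtain ⟨c, hnc, hcr, hac, hc, hminB⟩ := hP.exists_cut_b_of_rowB_eq_insert hn hnr h0 hμ hA hB
  have hvr : P.v n r = μ := by
    rw [v_eq_of_cut hnc hcr hminB (fun m hm hmr => (hc m (by omega) hmr).2 hm), hac,
      a_eq_zero_of_lt (lt_add_one r), Nat.cast_zero, sub_zero]
  have hU := hP.1.map_u_maximalA hn hnr le_rfl hd
  rw [filter_true_of_mem fun j hj => (hallMax j (mem_Icc.1 hj).1 (mem_Icc.1 hj).2).1, hvr, hbr,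
    hB, filter_insert, if_neg (lt_irrefl 0),
    filter_true_of_mem fun t ht => Nat.pos_of_ne_zero fun h => h0' (h ▸ ht)] at hU
  refine ⟨fun j hj hjr hminj => v_eq_zero_of_minimalB fun m hm hmj => hminB m hm ?_, hallMax,
    by rw [hP.1.map_v_maximalB hn hnc hcr hc hminB, hac], by simpa using hU⟩
  by_contra hcm
  exact hP.1.not_minimalB_and_maximalB hn h0 hj hjr ⟨hminj, (hc j hj hjr).2 (by omega)⟩

end GTPattern

section Roots

variable {r : ℕ} {σ : Equiv.Perm (Fin r)} {ε : Fin r → ℤˣ}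

theorem eVec_eq_single (k : Fin r) : eVec r k = Pi.single k 1 := by
  ext j
  simp [eVec, Pi.single_apply]

theorem ip_eq_dotProduct (x y : Fin r → ℝ) : ip x y = x ⬝ᵥ y := rfl

theorem dlam_two_smul_eVec (L : Fin r → ℝ) (k : Fin r) : dlam L ((2 : ℝ) • eVec r k) = L k := by
  simp [dlam, ip_eq_dotProduct, eVec_eq_single]
  ring

theorem dlam_eVec_add {a b : Fin r} (L : Fin r → ℝ) (h : a ≠ b) :
    dlam L (eVec r a + eVec r b) = L a + L b := by
  simp [dlam, ip_eq_dotProduct, eVec_eq_single, h, h.symm]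
  ring

theorem dlam_eVec_sub {a b : Fin r} (L : Fin r → ℝ) (h : a ≠ b) :
    dlam L (eVec r a - eVec r b) = L a - L b := by
  simp [dlam, ip_eq_dotProduct, eVec_eq_single, h, h.symm]
  ring

theorem wAct_add (s t : Fin r → ℝ) : wAct σ ε (s + t) = wAct σ ε s + wAct σ ε t := by
  ext j
  simp [wAct, mul_add]

theorem wAct_smul (x : ℝ) (t : Fin r → ℝ) : wAct σ ε (x • t) = x • wAct σ ε t := by
  ext j
  simp only [wAct, Pi.smul_apply, smul_eq_mul]
  ring

theorem wAct_eVec (p : Fin r) : wAct σ ε (eVec r (σ⁻¹ p)) = ((ε p : ℤ) : ℝ) • eVec r p := by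
  ext j
  by_cases h : j = p <;> simp [wAct, eVec, h]

theorem mem_PhiW {α : Fin r → ℝ} :
    α ∈ PhiW σ ε ↔ α ∈ PhiPlus r ∧ -wAct σ ε α ∈ PhiPlus r := Iff.rfl

theorem exists_lt_pos_of_mem_PhiPlus {α : Fin r → ℝ} (hα : α ∈ PhiPlus r) {k : Fin r}
    (hk : α k < 0) : ∃ m, k < m ∧ 0 < α m := by
  rcases hα with ⟨p, rfl⟩ | ⟨p, q, hpq, rfl | rfl⟩
  · simp only [Pi.smul_apply, eVec, smul_eq_mul] at hk
    split_ifs at hk <;> norm_num at hk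
  · simp only [Pi.add_apply, eVec] at hk
    split_ifs at hk <;> norm_num at hk
  · refine ⟨q, ?_, by simp [eVec, hpq.ne']⟩
    by_cases hkq : k = q
    · norm_num [eVec, hkq, hpq.ne'] at hk
    by_cases hkp : k = p
    · exact hkp ▸ hpq
    · simp [eVec, hkq, hkp] at hk

theorem smul_add_smul_mem_PhiPlus_iff {i j : Fin r} (hji : j < i) {x y : ℝ}
    (hx : x = 1 ∨ x = -1) (hy : y = 1 ∨ y = -1) :
    x • eVec r i + y • eVec r j ∈ PhiPlus r ↔ x = 1 := by
  constructor
  · intro hα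
    refine hx.resolve_right fun hx1 => ?_
    obtain ⟨m, him, hm⟩ := exists_lt_pos_of_mem_PhiPlus hα (k := i) (by simp [eVec, hx1, hji.ne'])
    simp [eVec, him.ne', (hji.trans him).ne'] at hm
  · rintro rfl
    refine Or.inr ⟨j, i, hji, ?_⟩
    rcases hy with rfl | rfl
    · exact Or.inl (by simp)
    · exact Or.inr (by simp [sub_eq_add_neg])

theorem smul_add_smul_mem_PhiW_iff {i j : Fin r} (hji : j < i) {x y : ℝ} (hx : x = 1 ∨ x = -1)
    (hy : y = 1 ∨ y = -1) (hα : x • eVec r (σ⁻¹ i) + y • eVec r (σ⁻¹ j) ∈ PhiPlus r) :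
    x • eVec r (σ⁻¹ i) + y • eVec r (σ⁻¹ j) ∈ PhiW σ ε ↔ x * (ε i : ℤ) = -1 := by
  have hw : -wAct σ ε (x • eVec r (σ⁻¹ i) + y • eVec r (σ⁻¹ j))
      = (-(x * (ε i : ℤ))) • eVec r i + (-(y * (ε j : ℤ))) • eVec r j := by
    rw [wAct_add, wAct_smul, wAct_smul, wAct_eVec, wAct_eVec, smul_smul, smul_smul, neg_add,
      ← neg_smul, ← neg_smul]
  have hsign : ∀ z : ℝ, (z = 1 ∨ z = -1) → ∀ u : ℤˣ, -(z * (u : ℤ)) = 1 ∨ -(z * (u : ℤ)) = -1 :=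
    fun z hz u => by
      rcases hz with rfl | rfl <;> rcases Int.cast_units_eq_one_or (R := ℝ) u with h | h <;>
        simp [h]
  rw [mem_PhiW, hw, smul_add_smul_mem_PhiPlus_iff hji (hsign x hx _) (hsign y hy _),
    neg_eq_iff_eq_neg]
  exact and_iff_right hα

theorem rootL_mem_PhiW_iff {i : Fin r} : rootL σ i ∈ PhiW σ ε ↔ ε i = -1 := by
  have hw : -wAct σ ε (rootL σ i) = (-(2 * (ε i : ℤ)) : ℝ) • eVec r i := by
    rw [rootL, wAct_smul, wAct_eVec, smul_smul, ← neg_smul]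
  rw [mem_PhiW, hw, and_iff_right (show rootL σ i ∈ PhiPlus r from Or.inl ⟨_, rfl⟩)]
  rcases Int.units_eq_one_or (ε i) with h | h
  · refine iff_of_false (fun hα => ?_) (by rw [h]; decide)
    obtain ⟨m, him, hm⟩ := exists_lt_pos_of_mem_PhiPlus hα (k := i) (by simp [h, eVec])
    simp [h, eVec, him.ne'] at hm
  · refine iff_of_true ?_ h
    rw [show -(2 * ((ε i : ℤ) : ℝ)) = 2 by rw [h]; norm_num]
    exact Or.inl ⟨i, rfl⟩

theorem rootP_mem_PhiW_iff {i j : Fin r} (hji : j < i) :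
    rootP σ i j ∈ PhiW σ ε ↔ ε i = -1 := by
  have hroot : rootP σ i j = (1 : ℝ) • eVec r (σ⁻¹ i) + (1 : ℝ) • eVec r (σ⁻¹ j) := by
    rw [rootP, one_smul, one_smul, add_comm]
  have hne : σ⁻¹ i ≠ σ⁻¹ j := fun h => hji.ne' (σ⁻¹.injective h)
  have hα : rootP σ i j ∈ PhiPlus r := by
    rcases hne.lt_or_gt with h | h
    · exact Or.inr ⟨σ⁻¹ i, σ⁻¹ j, h, Or.inl rfl⟩
    · exact Or.inr ⟨σ⁻¹ j, σ⁻¹ i, h, Or.inl (add_comm _ _)⟩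
  rw [hroot] at hα ⊢
  rw [smul_add_smul_mem_PhiW_iff hji (Or.inl rfl) (Or.inl rfl) hα, one_mul]
  rcases Int.units_eq_one_or (ε i) with h | h <;> norm_num [h]

theorem rootM_mem_PhiW_iff {i j : Fin r} (hji : j < i) :
    rootM σ i j ∈ PhiW σ ε ↔ (σ⁻¹ i < σ⁻¹ j ↔ ε i = 1) := by
  have hne : σ⁻¹ i ≠ σ⁻¹ j := fun h => hji.ne' (σ⁻¹.injective h)
  by_cases hlt : σ⁻¹ i < σ⁻¹ j
  · have hroot : rootM σ i j = (-1 : ℝ) • eVec r (σ⁻¹ i) + (1 : ℝ) • eVec r (σ⁻¹ j) := by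
      rw [rootM, if_pos hlt, neg_one_smul, one_smul, neg_add_eq_sub]
    have hα : rootM σ i j ∈ PhiPlus r := by
      rw [rootM, if_pos hlt]
      exact Or.inr ⟨σ⁻¹ i, σ⁻¹ j, hlt, Or.inr rfl⟩
    rw [hroot] at hα ⊢
    rw [smul_add_smul_mem_PhiW_iff hji (Or.inr rfl) (Or.inl rfl) hα, iff_true_left hlt]
    rcases Int.units_eq_one_or (ε i) with h | h <;> norm_num [h]
  · have hgt : σ⁻¹ j < σ⁻¹ i := lt_of_le_of_ne (not_lt.1 hlt) hne.symm
    have hroot : rootM σ i j = (1 : ℝ) • eVec r (σ⁻¹ i) + (-1 : ℝ) • eVec r (σ⁻¹ j) := by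
      rw [rootM, if_neg hlt, neg_one_smul, one_smul, sub_eq_add_neg]
    have hα : rootM σ i j ∈ PhiPlus r := by
      rw [rootM, if_neg hlt]
      exact Or.inr ⟨σ⁻¹ j, σ⁻¹ i, hgt, Or.inr rfl⟩
    rw [hroot] at hα ⊢
    rw [smul_add_smul_mem_PhiW_iff hji (Or.inl rfl) (Or.inr rfl) hα, iff_false_left hlt]
    rcases Int.units_eq_one_or (ε i) with h | h <;> norm_num [h]

open scoped Classical in
/-- The multiset `{d_λ(α) : α ∈ Φ_w^{(i)}}`. -/
noncomputable def rootExponents (L : Fin r → ℝ) (σ : Equiv.Perm (Fin r)) (ε : Fin r → ℤˣ)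
    (i : Fin r) : Multiset ℝ :=
  (if rootL σ i ∈ PhiW σ ε then ({dlam L (rootL σ i)} : Multiset ℝ) else 0)
    + Multiset.map (fun j => dlam L (rootP σ i j))
        (univ.filter fun j : Fin r => j < i ∧ rootP σ i j ∈ PhiW σ ε).val
    + Multiset.map (fun j => dlam L (rootM σ i j))
        (univ.filter fun j : Fin r => j < i ∧ rootM σ i j ∈ PhiW σ ε).val

theorem rootExponents_of_eq_one (L : Fin r → ℝ) {i : Fin r} (hε : ε i = 1) :
    rootExponents L σ ε i = Multiset.map (fun j => L (σ⁻¹ j) - L (σ⁻¹ i))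
      (univ.filter fun j : Fin r => j < i ∧ σ⁻¹ i < σ⁻¹ j).val := by
  classical
  have hL : rootL σ i ∉ PhiW σ ε := by
    rw [rootL_mem_PhiW_iff, hε]
    decide
  have hP : univ.filter (fun j : Fin r => j < i ∧ rootP σ i j ∈ PhiW σ ε) = ∅ :=
    filter_false_of_mem fun j _ ⟨hji, h⟩ => by
      rw [rootP_mem_PhiW_iff hji, hε] at h
      exact absurd h (by decide)
  have hM : univ.filter (fun j : Fin r => j < i ∧ rootM σ i j ∈ PhiW σ ε)
      = univ.filter fun j => j < i ∧ σ⁻¹ i < σ⁻¹ j :=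
    filter_congr fun j _ => and_congr_right fun hji => by
      rw [rootM_mem_PhiW_iff hji, iff_true_right hε]
  rw [rootExponents]
  simp only [if_neg hL, hP, hM, empty_val, Multiset.map_zero, zero_add]
  refine Multiset.map_congr rfl fun j hj => ?_
  have hlt := ((mem_filter.1 (show j ∈ univ.filter _ from hj)).2).2
  rw [rootM, if_pos hlt, dlam_eVec_sub _ hlt.ne']

theorem rootExponents_of_eq_neg_one (L : Fin r → ℝ) {i : Fin r} (hε : ε i = -1) :
    rootExponents L σ ε i
      = L (σ⁻¹ i) ::ₘ Multiset.map (fun j => L (σ⁻¹ i) - L (σ⁻¹ j))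
          (univ.filter fun j : Fin r => j < i ∧ σ⁻¹ j < σ⁻¹ i).val
        + Multiset.map (fun j => L (σ⁻¹ i) + L (σ⁻¹ j))
            (univ.filter fun j : Fin r => j < i).val := by
  classical
  have hP : univ.filter (fun j : Fin r => j < i ∧ rootP σ i j ∈ PhiW σ ε)
      = univ.filter fun j => j < i :=
    filter_congr fun j _ => and_iff_left_of_imp fun hji => (rootP_mem_PhiW_iff hji).2 hε
  have hM : univ.filter (fun j : Fin r => j < i ∧ rootM σ i j ∈ PhiW σ ε)
      = univ.filter fun j => j < i ∧ σ⁻¹ j < σ⁻¹ i :=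
    filter_congr fun j _ => and_congr_right fun hji => by
      rw [rootM_mem_PhiW_iff hji, hε, iff_false_right (by decide : ¬ (-1 : ℤˣ) = 1), not_lt]
      exact ⟨fun h => h.lt_of_ne (σ⁻¹.injective.ne hji.ne), le_of_lt⟩
  have hPval : Multiset.map (fun j => dlam L (rootP σ i j)) (univ.filter fun j : Fin r => j < i).val
      = Multiset.map (fun j => L (σ⁻¹ i) + L (σ⁻¹ j)) (univ.filter fun j : Fin r => j < i).val :=
    Multiset.map_congr rfl fun j hj => by
      have hji := (mem_filter.1 (show j ∈ univ.filter _ from hj)).2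
      rw [rootP, dlam_eVec_add _ (σ⁻¹.injective.ne hji.ne), add_comm]
  have hMval : Multiset.map (fun j => dlam L (rootM σ i j))
        (univ.filter fun j : Fin r => j < i ∧ σ⁻¹ j < σ⁻¹ i).val
      = Multiset.map (fun j => L (σ⁻¹ i) - L (σ⁻¹ j))
          (univ.filter fun j : Fin r => j < i ∧ σ⁻¹ j < σ⁻¹ i).val :=
    Multiset.map_congr rfl fun j hj => by
      have hlt := ((mem_filter.1 (show j ∈ univ.filter _ from hj)).2).2
      rw [rootM, if_neg hlt.not_gt, dlam_eVec_sub _ hlt.ne']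
  rw [rootExponents, if_pos (rootL_mem_PhiW_iff.2 hε), rootL, dlam_two_smul_eVec, hP, hM, hPval,
    hMval, ← Multiset.singleton_add, add_assoc, add_comm (Multiset.map _ _)]
  rfl

end Roots
open scoped Classical in
theorem gt_stable_gauss_exponents_general (r : ℕ) (l : ℕ → ℕ)
    (P : GTPattern r l) (hP : P.Stable)
    (σ : Equiv.Perm (Fin r)) (ε : Fin r → ℤˣ)
    (hw : ∀ j : Fin r,
      (ε j : ℤ) * (Lfun l ((σ⁻¹ j).1 + 1) : ℤ) = - P.wgt (j.1 + 1)) :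
    ∀ i : Fin r,
      (∀ j, r - i.1 ≤ j → j ≤ r → P.MinimalB (r - i.1) j → P.v (r - i.1) j = 0) ∧
      (∀ j, r - i.1 + 1 ≤ j → j ≤ r → P.MinimalA (r - i.1) j → P.u (r - i.1) j = 0) ∧
      (Multiset.map (fun j => ((P.v (r - i.1) j : ℤ) : ℝ))
          ((Finset.Icc (r - i.1) r).filter (fun j => P.MaximalB (r - i.1) j)).val
        + Multiset.map (fun j => ((P.u (r - i.1) j : ℤ) : ℝ))
            ((Finset.Icc (r - i.1 + 1) r).filter (fun j => P.MaximalA (r - i.1) j)).val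
        = (if rootL σ i ∈ PhiW σ ε then
            ({dlam (Lreal l r) (rootL σ i)} : Multiset ℝ) else 0)
          + Multiset.map (fun j => dlam (Lreal l r) (rootP σ i j))
              (Finset.univ.filter
                (fun j : Fin r => j < i ∧ rootP σ i j ∈ PhiW σ ε)).val
          + Multiset.map (fun j => dlam (Lreal l r) (rootM σ i j))
              (Finset.univ.filter
                (fun j : Fin r => j < i ∧ rootM σ i j ∈ PhiW σ ε)).val) ∧
      (ε i = 1 →
        (∀ j, r - i.1 ≤ j → j ≤ r → P.v (r - i.1) j = 0) ∧
        Multiset.map (fun j => ((P.u (r - i.1) j : ℤ) : ℝ))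
            ((Finset.Icc (r - i.1 + 1) r).filter (fun j => P.MaximalA (r - i.1) j)).val
          = Multiset.map
              (fun j : Fin r => Lreal l r (σ⁻¹ j) - Lreal l r (σ⁻¹ i))
              (Finset.univ.filter
                (fun j : Fin r => j < i ∧ σ⁻¹ i < σ⁻¹ j)).val) ∧
      (ε i = -1 →
        Multiset.map (fun j => ((P.v (r - i.1) j : ℤ) : ℝ))
            ((Finset.Icc (r - i.1) r).filter (fun j => P.MaximalB (r - i.1) j)).val
          = Lreal l r (σ⁻¹ i) ::ₘ
              Multiset.map
                (fun j : Fin r => Lreal l r (σ⁻¹ i) - Lreal l r (σ⁻¹ j))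
                (Finset.univ.filter
                  (fun j : Fin r => j < i ∧ σ⁻¹ j < σ⁻¹ i)).val ∧
        (∀ j, r - i.1 + 1 ≤ j → j ≤ r → P.MaximalA (r - i.1) j) ∧
        Multiset.map (fun j => ((P.u (r - i.1) j : ℤ) : ℝ))
            (Finset.Icc (r - i.1 + 1) r).val
          = Multiset.map
              (fun j : Fin r => Lreal l r (σ⁻¹ i) + Lreal l r (σ⁻¹ j))
              (Finset.univ.filter (fun j : Fin r => j < i)).val) := by
  intro i
  obtain ⟨h0, hμ, hA, hcase⟩ := hP.rows_of_isAssociated hw i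
  have hAL : P.rowA (r - i.1 - 1) = Lvals l σ (i.1 + 1) := by
    rw [Nat.sub_sub, hP.rowA_eq_Lvals hw i.2]
  rcases hcase with ⟨hε, hB⟩ | ⟨hε, hB⟩
  · obtain ⟨hv, hu, hU⟩ := hP.exponents_of_rowB_eq_rowA (by omega) (by omega) h0 hA hB
    rw [hAL, map_filter_Lvals_gt] at hU
    refine ⟨fun j hj hjr _ => (hv j hj hjr).2, hu, ?_,
      fun _ => ⟨fun j hj hjr => (hv j hj hjr).2, hU⟩, fun h => absurd (hε.symm.trans h) (by decide)⟩
    show _ = rootExponents (Lreal l r) σ ε i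
    rw [filter_false_of_mem fun j hj => (hv j (mem_Icc.1 hj).1 (mem_Icc.1 hj).2).1, empty_val,
      Multiset.map_zero, zero_add, hU, rootExponents_of_eq_one _ hε]
  · obtain ⟨hv, hmax, hV, hU⟩ := hP.exponents_of_rowB_eq_insert (by omega) (by omega) h0 hμ hA hB
    rw [hAL, map_filter_Lvals_lt] at hV
    rw [hP.rowA_eq_Lvals hw i.2.le, map_Lvals_add] at hU
    refine ⟨hv, fun j hj hjr hmin => absurd hmin (hmax j hj hjr).2, ?_,
      fun h => absurd (hε.symm.trans h) (by decide),
      fun _ => ⟨hV, fun j hj hjr => (hmax j hj hjr).1, hU⟩⟩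
    show _ = rootExponents (Lreal l r) σ ε i
    rw [filter_true_of_mem fun j hj => (hmax j (mem_Icc.1 hj).1 (mem_Icc.1 hj).2).1, hV, hU,
      rootExponents_of_eq_neg_one _ hε]
    rfl

open scoped Classical in
/-- Let `P ∈ GT(λ+ρ)` be a stable GT-pattern of rank `r`
with associated signed permutation `w = (σ, ε) ∈ W(C_r)`.  For each
`1 ≤ i ≤ r` (indexed by `i : Fin r` via `i ↦ i.1 + 1`, so that row index
`r+1−i` is `r − i.1`):
`u_{r+1−i,j} = 0` at every minimal `a_{r+1−i,j}` and `v_{r+1−i,j} = 0` at every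
minimal `b_{r+1−i,j}`; the multiset of `v`-values at maximal entries of row
`b_{r+1−i}` together with the `u`-values at maximal entries of row `a_{r+1−i}`
equals the multiset `{ d_λ(α) : α ∈ Φ_w^{(i)} }`.  Explicitly: if
`ε^{(i)} = +1`, all `v_{r+1−i,j}` vanish and the `u`-values at maximal entries
are `{ L_{σ⁻¹(j)} − L_{σ⁻¹(i)} : j < i, σ⁻¹(j) > σ⁻¹(i) }`; if `ε^{(i)} = −1`,
the `v`-values at maximal entries are `{L_{σ⁻¹(i)}} ∪ { L_{σ⁻¹(i)} − L_{σ⁻¹(j)}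
: j < i, σ⁻¹(j) < σ⁻¹(i) }`, every entry of row `a_{r+1−i}` is maximal, and the
`u`-values over that row are `{ L_{σ⁻¹(i)} + L_{σ⁻¹(j)} : j < i }`. -/
theorem gt_stable_gauss_exponents (r : ℕ) (hr : 1 ≤ r) (l : ℕ → ℕ)
    (P : GTPattern r l) (hP : P.Stable)
    (σ : Equiv.Perm (Fin r)) (ε : Fin r → ℤˣ)
    (hw : ∀ j : Fin r,
      (ε j : ℤ) * (Lfun l ((σ⁻¹ j).1 + 1) : ℤ) = - P.wgt (j.1 + 1)) :
    ∀ i : Fin r,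
      (∀ j, r - i.1 ≤ j → j ≤ r → P.MinimalB (r - i.1) j → P.v (r - i.1) j = 0) ∧
      (∀ j, r - i.1 + 1 ≤ j → j ≤ r → P.MinimalA (r - i.1) j → P.u (r - i.1) j = 0) ∧
      (Multiset.map (fun j => ((P.v (r - i.1) j : ℤ) : ℝ))
          ((Finset.Icc (r - i.1) r).filter (fun j => P.MaximalB (r - i.1) j)).val
        + Multiset.map (fun j => ((P.u (r - i.1) j : ℤ) : ℝ))
            ((Finset.Icc (r - i.1 + 1) r).filter (fun j => P.MaximalA (r - i.1) j)).val
        = (if rootL σ i ∈ PhiW σ ε then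
            ({dlam (Lreal l r) (rootL σ i)} : Multiset ℝ) else 0)
          + Multiset.map (fun j => dlam (Lreal l r) (rootP σ i j))
              (Finset.univ.filter
                (fun j : Fin r => j < i ∧ rootP σ i j ∈ PhiW σ ε)).val
          + Multiset.map (fun j => dlam (Lreal l r) (rootM σ i j))
              (Finset.univ.filter
                (fun j : Fin r => j < i ∧ rootM σ i j ∈ PhiW σ ε)).val) ∧
      (ε i = 1 →
        (∀ j, r - i.1 ≤ j → j ≤ r → P.v (r - i.1) j = 0) ∧
        Multiset.map (fun j => ((P.u (r - i.1) j : ℤ) : ℝ))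
            ((Finset.Icc (r - i.1 + 1) r).filter (fun j => P.MaximalA (r - i.1) j)).val
          = Multiset.map
              (fun j : Fin r => Lreal l r (σ⁻¹ j) - Lreal l r (σ⁻¹ i))
              (Finset.univ.filter
                (fun j : Fin r => j < i ∧ σ⁻¹ i < σ⁻¹ j)).val) ∧
      (ε i = -1 →
        Multiset.map (fun j => ((P.v (r - i.1) j : ℤ) : ℝ))
            ((Finset.Icc (r - i.1) r).filter (fun j => P.MaximalB (r - i.1) j)).val
          = Lreal l r (σ⁻¹ i) ::ₘ
              Multiset.map
                (fun j : Fin r => Lreal l r (σ⁻¹ i) - Lreal l r (σ⁻¹ j))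
                (Finset.univ.filter
                  (fun j : Fin r => j < i ∧ σ⁻¹ j < σ⁻¹ i)).val ∧
        (∀ j, r - i.1 + 1 ≤ j → j ≤ r → P.MaximalA (r - i.1) j) ∧
        Multiset.map (fun j => ((P.u (r - i.1) j : ℤ) : ℝ))
            (Finset.Icc (r - i.1 + 1) r).val
          = Multiset.map
              (fun j : Fin r => Lreal l r (σ⁻¹ i) + Lreal l r (σ⁻¹ j))
              (Finset.univ.filter (fun j : Fin r => j < i)).val) :=
  gt_stable_gauss_exponents_general r l P hP σ ε hw
end
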